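/- Let p ∈ 𝔻 \ {0}, let λ ∈ ℂ with |λ| = 1 and λp = conj(p), and let φ(z) = (az+b)/(cz+d) (a,b,c,d ∈ ℂ, ad−bc ≠ 0) be a linear fractional self-map of 𝔻. Set σ(z) = (conj(a)·z − conj(c))/(−conj(b)·z + conj(d)), g(z) = 1/(−conj(b)·z + conj(d)), h(z) = cz + d. If w ∈ 𝔻 satisfies conj(a)·w ≠ conj(c), then for all z ∈ 𝔻: (JW_{ξ_p,τ_p} C_φ* C_φ K_w)(z) = conj(ξ_p(conj(z))) · [ −conj(c)·(g(w)/σ(w))·K_{conj(φ(0))}(conj(τ_p(conj(z)))) + conj(h(1/conj(σ(w))))·g(w)·K_{conj(φ(σ(w)))}(conj(τ_p(conj(z)))) ]. -/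

import Mathlib

open scoped ComplexConjugate InnerProductSpace ENNReal NNReal
open Complex Metric

noncomputable section

abbrev H2 : Type := lp (fun _ : ℕ => ℂ) 2

namespace H2

/-- Evaluation of an element of `H²` (given by its sequence of Taylor coefficients)
at a point `z` of the unit disk: `f(z) = ∑ aₙ zⁿ`. -/
def eval (f : H2) (z : ℂ) : ℂ := ∑' n : ℕ, (f : ∀ _ : ℕ, ℂ) n * z ^ n

/-- The Szegő kernel function `K_w(z) = 1/(1 - conj w * z)`. -/
def ker (w z : ℂ) : ℂ := (1 - conj w * z)⁻¹

lemma kernel_memℓp (w : ℂ) (hw : ‖w‖ < 1) :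
    Memℓp (fun n : ℕ => (conj w) ^ n) 2 := by
  apply memℓp_gen
  have hsum : Summable (fun n : ℕ => (‖w‖ ^ 2) ^ n) :=
    summable_geometric_of_lt_one (by positivity) (by nlinarith [norm_nonneg w])
  refine hsum.congr fun n => ?_
  have h2 : ((2 : ℝ≥0∞).toReal) = ((2 : ℕ) : ℝ) := by simp
  rw [h2, Real.rpow_natCast]
  simp [norm_pow, ← pow_mul, Nat.mul_comm]

/-- The reproducing kernel of `H²` at `w` in the unit disk, as an element of `H²`. -/
def kernel (w : ℂ) : H2 :=
  if hw : ‖w‖ < 1 then ⟨fun n : ℕ => (conj w) ^ n, kernel_memℓp w hw⟩ else 0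

/-- `T` is the composition operator `C_φ` on `H²`. -/
def IsCompOp (φ : ℂ → ℂ) (T : H2 →L[ℂ] H2) : Prop :=
  ∀ f : H2, ∀ z : ℂ, ‖z‖ < 1 → eval (T f) z = eval f (φ z)

/-- `W` is the weighted composition operator `W_{ψ,φ}` on `H²`. -/
def IsWCompOp (ψ φ : ℂ → ℂ) (W : H2 →L[ℂ] H2) : Prop :=
  ∀ f : H2, ∀ z : ℂ, ‖z‖ < 1 → eval (W f) z = ψ z * eval f (φ z)

/-- A conjugation on `H²`: a conjugate-linear involution satisfying `⟪Cx, Cy⟫ = ⟪y, x⟫`. -/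
structure IsConjugation (C : H2 → H2) : Prop where
  map_add : ∀ x y : H2, C (x + y) = C x + C y
  map_smul : ∀ (c : ℂ) (x : H2), C (c • x) = conj c • C x
  invol : ∀ x : H2, C (C x) = x
  inner_conj : ∀ x y : H2, ⟪C x, C y⟫_ℂ = ⟪y, x⟫_ℂ

/-- `T` is `C`-normal: `C T* T C = T T*`. -/
def CNormal (C : H2 → H2) (T : H2 →L[ℂ] H2) : Prop :=
  ∀ x : H2, C ((ContinuousLinearMap.adjoint T) (T (C x)))
      = T ((ContinuousLinearMap.adjoint T) x)

/-- `T` is a normal operator: `T* T = T T*`. -/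
def IsNormalOp (T : H2 →L[ℂ] H2) : Prop :=
  (ContinuousLinearMap.adjoint T).comp T = T.comp (ContinuousLinearMap.adjoint T)

/-- `T` is a unitary operator. -/
def IsUnitaryOp (T : H2 →L[ℂ] H2) : Prop :=
  T.comp (ContinuousLinearMap.adjoint T) = ContinuousLinearMap.id ℂ H2 ∧
  (ContinuousLinearMap.adjoint T).comp T = ContinuousLinearMap.id ℂ H2

/-- `C` is the conjugation `J_μ` on `H²`: `(J_μ f)(z) = conj (f (μ * conj z))`. -/
def IsJmu (μ : ℂ) (C : H2 → H2) : Prop :=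
  ∀ f : H2, ∀ z : ℂ, ‖z‖ < 1 → eval (C f) z = conj (eval f (μ * conj z))

/-- `ξ_p(z) = √(1-|p|²) / (1 - conj p * z)`. -/
def xi (p z : ℂ) : ℂ := (Real.sqrt (1 - ‖p‖ ^ 2) : ℂ) / (1 - conj p * z)

/-- `τ_p(z) = λ (p - z) / (1 - conj p * z)`. -/
def tau (p lam z : ℂ) : ℂ := lam * (p - z) / (1 - conj p * z)

/-- `C` is the conjugation `J W_{ξ_p, τ_p}` on `H²`:
`(C f)(z) = conj (ξ_p(conj z) * f (τ_p (conj z)))`. -/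
def IsJW (p lam : ℂ) (C : H2 → H2) : Prop :=
  ∀ f : H2, ∀ z : ℂ, ‖z‖ < 1 →
    eval (C f) z = conj (xi p (conj z) * eval f (tau p lam (conj z)))

end H2

/-! Since `C_φ* K_v = K_{φ v}`, everything reduces to expanding `C_φ K_w = K_w ∘ φ`, which is
`(c z + d) / (γ z + δ)` with `γ = c - a w̄`, `δ = d - b w̄`. Partial fractions write it as
`(c/γ) K_0 + (d/δ - c/γ) K_{σ(w)}` where `conj σ(w) = -γ/δ`. This is a combination of genuine
kernels because `|γ| < |δ|`: the affine function `γ z + δ = (c z + d) - w̄ (a z + b)` has no zero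
in the closed disk, since `|a z + b| ≤ |c z + d|` there by continuity and `ad - bc ≠ 0` rules out
a common zero of `a z + b` and `c z + d`. Applying `JW_{ξ_p,τ_p}` finally evaluates at `τ_p(z̄)`,
a point of the disk. -/

open Filter Topology

namespace H2

lemma summable_eval (f : H2) {z : ℂ} (hz : ‖z‖ < 1) :
    Summable (fun n : ℕ => (f : ∀ _ : ℕ, ℂ) n * z ^ n) := by
  refine Summable.of_norm <| ((summable_geometric_of_lt_one (norm_nonneg z) hz).mul_left ‖f‖
    ).of_nonneg_of_le (fun n => norm_nonneg _) fun n => ?_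
  rw [norm_mul, norm_pow]
  gcongr
  exact lp.norm_apply_le_norm two_ne_zero f n

lemma eval_add (f g : H2) {z : ℂ} (hz : ‖z‖ < 1) :
    eval (f + g) z = eval f z + eval g z := by
  simp only [eval, lp.coeFn_add, Pi.add_apply, add_mul]
  exact (summable_eval f hz).tsum_add (summable_eval g hz)

lemma eval_smul (c : ℂ) (f : H2) (z : ℂ) : eval (c • f) z = c * eval f z := by
  simp only [eval, lp.coeFn_smul, Pi.smul_apply, smul_eq_mul, mul_assoc]
  exact tsum_mul_left

lemma hasFPowerSeriesOnBall_eval (f : H2) :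
    HasFPowerSeriesOnBall (eval f) (FormalMultilinearSeries.ofScalars ℂ (f : ℕ → ℂ)) 0 1 where
  r_le := ENNReal.le_of_forall_nnreal_lt fun r hr =>
    FormalMultilinearSeries.le_radius_of_bound _ ‖f‖ fun n => by
      rw [FormalMultilinearSeries.ofScalars_norm]
      have hr1 : (r : ℝ) ^ n ≤ 1 := pow_le_one₀ r.2 (by exact_mod_cast hr.le)
      exact (mul_le_of_le_one_right (norm_nonneg _) hr1).trans
        (lp.norm_apply_le_norm two_ne_zero f n)
  r_pos := one_pos
  hasSum := fun {y} hy => by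
    have hy' : ‖y‖ < 1 := by simpa [← ofReal_norm, ENNReal.ofReal_lt_one] using hy
    simpa [FormalMultilinearSeries.ofScalars_apply_eq', eval, mul_comm]
      using (summable_eval f hy').hasSum

lemma ext_of_eval {f g : H2} (h : ∀ z : ℂ, ‖z‖ < 1 → eval f z = eval g z) : f = g := by
  have hfg : ∀ᶠ z in 𝓝 0, eval f z = eval g z := by
    filter_upwards [ball_mem_nhds (0 : ℂ) one_pos] with z hz
    exact h z (by simpa using hz)
  exact lp.ext <| FormalMultilinearSeries.ofScalars_series_injective (𝕜 := ℂ) ℂ <|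
    (hasFPowerSeriesOnBall_eval f).hasFPowerSeriesAt.eq_formalMultilinearSeries_of_eventually
      (hasFPowerSeriesOnBall_eval g).hasFPowerSeriesAt hfg

lemma kernel_coe {w : ℂ} (hw : ‖w‖ < 1) : (kernel w : ℕ → ℂ) = fun n => conj w ^ n := by
  rw [kernel, dif_pos hw]

lemma eval_kernel {w z : ℂ} (hw : ‖w‖ < 1) (hz : ‖z‖ < 1) : eval (kernel w) z = ker w z := by
  have hwz : ‖conj w * z‖ < 1 := by
    rw [norm_mul, RCLike.norm_conj]
    exact mul_lt_one_of_nonneg_of_lt_one_left (norm_nonneg w) hw hz.le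
  simp only [eval, kernel_coe hw, ← mul_pow, ker]
  exact tsum_geometric_of_norm_lt_one hwz

lemma inner_kernel (f : H2) {z : ℂ} (hz : ‖z‖ < 1) : ⟪kernel z, f⟫_ℂ = eval f z := by
  simp [lp.inner_eq_tsum, eval, kernel_coe hz, mul_comm]

lemma conj_ker (w z : ℂ) : conj (ker w z) = ker (conj w) (conj z) := by
  simp [ker]

lemma IsCompOp.adjoint_kernel {φ : ℂ → ℂ} {T : H2 →L[ℂ] H2} (hT : IsCompOp φ T)
    (hself : ∀ z : ℂ, ‖z‖ < 1 → ‖φ z‖ < 1) {v : ℂ} (hv : ‖v‖ < 1) :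
    ContinuousLinearMap.adjoint T (kernel v) = kernel (φ v) :=
  ext_inner_right ℂ fun f => by
    rw [ContinuousLinearMap.adjoint_inner_left, inner_kernel _ hv, hT f v hv,
      inner_kernel f (hself v hv)]

lemma normSq_one_sub_conj_mul_sub_normSq_sub (p u : ℂ) :
    normSq (1 - conj p * u) - normSq (p - u) = (1 - normSq p) * (1 - normSq u) := by
  simp only [normSq_apply, sub_re, sub_im, mul_re, mul_im, conj_re, conj_im, one_re, one_im]
  ring

lemma norm_tau_lt_one {p lam u : ℂ} (hp : ‖p‖ < 1) (hlam : ‖lam‖ = 1) (hu : ‖u‖ < 1) :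
    ‖tau p lam u‖ < 1 := by
  have hsq : ‖p - u‖ ^ 2 < ‖1 - conj p * u‖ ^ 2 := by
    have hp2 : normSq p < 1 := by rw [← Complex.sq_norm]; nlinarith [norm_nonneg p]
    have hu2 : normSq u < 1 := by rw [← Complex.sq_norm]; nlinarith [norm_nonneg u]
    rw [Complex.sq_norm, Complex.sq_norm, ← sub_pos, normSq_one_sub_conj_mul_sub_normSq_sub]
    nlinarith
  have hlt := (pow_lt_pow_iff_left₀ (norm_nonneg _) (norm_nonneg _) two_ne_zero).mp hsq
  rw [tau, norm_div, norm_mul, hlam, one_mul, div_lt_one ((norm_nonneg _).trans_lt hlt)]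
  exact hlt

lemma norm_lt_norm_of_mul_add_ne_zero {γ δ : ℂ} (h : ∀ z : ℂ, ‖z‖ ≤ 1 → γ * z + δ ≠ 0) :
    ‖γ‖ < ‖δ‖ := by
  by_contra! hle
  have hγ : γ ≠ 0 := by
    rintro rfl
    exact h 0 (by simp) (by simpa using hle)
  refine h (-δ / γ) ?_ (by field_simp; ring)
  rw [norm_div, norm_neg]
  exact div_le_one_of_le₀ hle (norm_nonneg _)

lemma norm_conj_neg_div_lt_one {γ δ : ℂ} (h : ∀ z : ℂ, ‖z‖ ≤ 1 → γ * z + δ ≠ 0) :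
    ‖conj (-γ / δ)‖ < 1 := by
  have hlt := norm_lt_norm_of_mul_add_ne_zero h
  rw [RCLike.norm_conj, norm_div, norm_neg, div_lt_one ((norm_nonneg _).trans_lt hlt)]
  exact hlt

section LinearFractional

variable {a b c d : ℂ} {φ : ℂ → ℂ} {T : H2 →L[ℂ] H2}

lemma norm_mul_add_le_of_norm_le_one (hden : ∀ z : ℂ, ‖z‖ < 1 → c * z + d ≠ 0)
    (hself : ∀ z : ℂ, ‖z‖ < 1 → ‖(a * z + b) / (c * z + d)‖ < 1) {z : ℂ} (hz : ‖z‖ ≤ 1) :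
    ‖a * z + b‖ ≤ ‖c * z + d‖ := by
  have hball : ball (0 : ℂ) 1 ⊆ {z | ‖a * z + b‖ ≤ ‖c * z + d‖} := fun z hz => by
    have hφz := hself z (by simpa using hz)
    rw [norm_div, div_lt_one (norm_pos_iff.mpr (hden z (by simpa using hz)))] at hφz
    exact hφz.le
  have hclosed := closure_minimal hball (isClosed_le (by fun_prop) (by fun_prop))
  rw [closure_ball (0 : ℂ) one_ne_zero] at hclosed
  exact hclosed (by simpa using hz)

lemma sub_mul_conj_mul_add_ne_zero (hdet : a * d - b * c ≠ 0)
    (hden : ∀ z : ℂ, ‖z‖ < 1 → c * z + d ≠ 0)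
    (hself : ∀ z : ℂ, ‖z‖ < 1 → ‖(a * z + b) / (c * z + d)‖ < 1) {w : ℂ} (hw : ‖w‖ < 1) :
    ∀ z : ℂ, ‖z‖ ≤ 1 → (c - a * conj w) * z + (d - b * conj w) ≠ 0 := by
  intro z hz h0
  have hle := norm_mul_add_le_of_norm_le_one hden hself hz
  have hcd : c * z + d = conj w * (a * z + b) := by linear_combination h0
  have hcd0 : c * z + d = 0 := by
    have hnorm : ‖c * z + d‖ ≤ ‖w‖ * ‖c * z + d‖ :=
      calc ‖c * z + d‖ = ‖w‖ * ‖a * z + b‖ := by rw [hcd, norm_mul, RCLike.norm_conj]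
        _ ≤ ‖w‖ * ‖c * z + d‖ := by gcongr
    exact norm_eq_zero.mp (by nlinarith [norm_nonneg (c * z + d), hnorm])
  have hab0 : a * z + b = 0 := by
    rw [hcd0, norm_zero] at hle
    exact norm_eq_zero.mp (le_antisymm hle (norm_nonneg _))
  have hz0 : z = 0 := by
    have hdet0 : z * (a * d - b * c) = 0 := by linear_combination d * hab0 - b * hcd0
    exact (mul_eq_zero.mp hdet0).resolve_right hdet
  exact hden 0 (by simp) (by simpa [hz0] using hcd0)

lemma IsCompOp.apply_kernel (hT : IsCompOp φ T) (hφ : ∀ z : ℂ, φ z = (a * z + b) / (c * z + d))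
    (hden : ∀ z : ℂ, ‖z‖ < 1 → c * z + d ≠ 0) (hself : ∀ z : ℂ, ‖z‖ < 1 → ‖φ z‖ < 1)
    {w γ δ : ℂ} (hw : ‖w‖ < 1) (hγ : γ = c - a * conj w) (hδ : δ = d - b * conj w) (hγ0 : γ ≠ 0)
    (hnz : ∀ z : ℂ, ‖z‖ ≤ 1 → γ * z + δ ≠ 0) :
    T (kernel w) = (c / γ) • kernel 0 + (d / δ - c / γ) • kernel (conj (-γ / δ)) := by
  -- partial fractions of `K_w ∘ φ = (c z + d) / (γ z + δ)`
  have hs := norm_conj_neg_div_lt_one hnz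
  have hδ0 : δ ≠ 0 := by simpa using hnz 0 (by simp)
  refine ext_of_eval fun z hz => ?_
  have hγz := hnz z hz.le
  have hcz := hden z hz
  have hK : 1 - conj w * ((a * z + b) / (c * z + d)) = (γ * z + δ) / (c * z + d) := by
    rw [eq_div_iff hcz, sub_mul, one_mul, mul_assoc, div_mul_cancel₀ _ hcz, hγ, hδ]
    ring
  have hKs : 1 - conj (conj (-γ / δ)) * z = (γ * z + δ) / δ := by
    rw [conj_conj]; field_simp; ring
  rw [hT _ z hz, eval_add _ _ hz, eval_smul, eval_smul, eval_kernel hw (hself z hz),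
    eval_kernel (by simp) hz, eval_kernel hs hz, hφ z]
  simp only [ker, hK, hKs, map_zero, zero_mul, sub_zero, inv_one, mul_one, inv_div]
  rw [eq_comm, ← sub_eq_zero]
  field_simp
  ring

-- Cowen's adjoint `σ` of `φ`, from `C_φ* = T_g C_σ T_h*` with `g`, `h` as in the statement.
def adjointMap (a b c d z : ℂ) : ℂ := (conj a * z - conj c) / (-(conj b) * z + conj d)

lemma adjointMap_eq_conj (w : ℂ) :
    adjointMap a b c d w = conj (-(c - a * conj w) / (d - b * conj w)) := by
  simp only [adjointMap, map_div₀, map_neg, map_sub, map_mul, conj_conj]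
  ring

lemma norm_adjointMap_lt_one (hdet : a * d - b * c ≠ 0)
    (hden : ∀ z : ℂ, ‖z‖ < 1 → c * z + d ≠ 0)
    (hself : ∀ z : ℂ, ‖z‖ < 1 → ‖(a * z + b) / (c * z + d)‖ < 1) {w : ℂ} (hw : ‖w‖ < 1) :
    ‖adjointMap a b c d w‖ < 1 := by
  rw [adjointMap_eq_conj]
  exact norm_conj_neg_div_lt_one (sub_mul_conj_mul_add_ne_zero hdet hden hself hw)

lemma IsCompOp.adjoint_apply_kernel (hT : IsCompOp φ T)
    (hφ : ∀ z : ℂ, φ z = (a * z + b) / (c * z + d)) (hdet : a * d - b * c ≠ 0)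
    (hden : ∀ z : ℂ, ‖z‖ < 1 → c * z + d ≠ 0) (hself : ∀ z : ℂ, ‖z‖ < 1 → ‖φ z‖ < 1)
    {w : ℂ} (hw : ‖w‖ < 1) (hwa : conj a * w ≠ conj c) :
    ContinuousLinearMap.adjoint T (T (kernel w)) =
      conj (-(conj c) * (1 / (-(conj b) * w + conj d) / adjointMap a b c d w)) • kernel (φ 0) +
        conj (conj (c * (1 / conj (adjointMap a b c d w)) + d) * (1 / (-(conj b) * w + conj d)))
          • kernel (φ (adjointMap a b c d w)) := by
  have hself' : ∀ z : ℂ, ‖z‖ < 1 → ‖(a * z + b) / (c * z + d)‖ < 1 := fun z hz =>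
    hφ z ▸ hself z hz
  obtain ⟨γ, hγ⟩ : ∃ γ, γ = c - a * conj w := ⟨_, rfl⟩
  obtain ⟨δ, hδ⟩ : ∃ δ, δ = d - b * conj w := ⟨_, rfl⟩
  have hnz : ∀ z : ℂ, ‖z‖ ≤ 1 → γ * z + δ ≠ 0 :=
    hγ ▸ hδ ▸ sub_mul_conj_mul_add_ne_zero hdet hden hself' hw
  have hγ0 : γ ≠ 0 := by
    rw [hγ, ← (map_ne_zero conj), map_sub, map_mul, conj_conj, sub_ne_zero]
    exact hwa.symm
  have hδ0 : δ ≠ 0 := by simpa using hnz 0 (by simp)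
  have hg : 1 / (-(conj b) * w + conj d) = conj (1 / δ) := by
    simp only [hδ, map_div₀, map_one, map_sub, map_mul, conj_conj]
    ring
  rw [apply_kernel hT hφ hden hself hw hγ hδ hγ0 hnz, map_add, map_smul, map_smul,
    adjoint_kernel hT hself (by simp), adjoint_kernel hT hself (norm_conj_neg_div_lt_one hnz),
    adjointMap_eq_conj, ← hγ, ← hδ, hg]
  congr 2
  · rw [← map_div₀, ← map_neg, ← map_mul, conj_conj]
    field_simp
  · rw [conj_conj, ← map_mul, conj_conj]
    field_simp
    ring

end LinearFractional

end H2

theorem stmt3_general (p lam a b c d w : ℂ)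
    (hp : ‖p‖ < 1) (hlam : ‖lam‖ = 1)
    (φ : ℂ → ℂ) (hφ : ∀ z : ℂ, φ z = (a * z + b) / (c * z + d))
    (hdet : a * d - b * c ≠ 0)
    (hden : ∀ z : ℂ, ‖z‖ < 1 → c * z + d ≠ 0)
    (hself : ∀ z : ℂ, ‖z‖ < 1 → ‖φ z‖ < 1)
    (σ : ℂ → ℂ) (hσ : ∀ z : ℂ, σ z = (conj a * z - conj c) / (-(conj b) * z + conj d))
    (g : ℂ → ℂ) (hg : ∀ z : ℂ, g z = 1 / (-(conj b) * z + conj d))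
    (h : ℂ → ℂ) (hh : ∀ z : ℂ, h z = c * z + d)
    (hw : ‖w‖ < 1) (hwa : conj a * w ≠ conj c)
    (T : H2 →L[ℂ] H2) (hT : H2.IsCompOp φ T)
    (C : H2 → H2) (hCJ : H2.IsJW p lam C) :
    ∀ z : ℂ, ‖z‖ < 1 →
      H2.eval (C ((ContinuousLinearMap.adjoint T) (T (H2.kernel w)))) z
        = conj (H2.xi p (conj z)) *
            (-(conj c) * (g w / σ w) *
                H2.ker (conj (φ 0)) (conj (H2.tau p lam (conj z)))
              + conj (h (1 / conj (σ w))) * g w *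
                H2.ker (conj (φ (σ w))) (conj (H2.tau p lam (conj z)))) := by
  intro z hz
  have hσ1 : ‖σ w‖ < 1 :=
    hσ w ▸ H2.norm_adjointMap_lt_one hdet hden (fun z hz => hφ z ▸ hself z hz) hw
  have hu := H2.norm_tau_lt_one hp hlam (u := conj z) (by simpa using hz)
  rw [hCJ _ z hz, H2.IsCompOp.adjoint_apply_kernel hT hφ hdet hden hself hw hwa,
    H2.eval_add _ _ hu, H2.eval_smul, H2.eval_smul, H2.eval_kernel (hself 0 (by simp)) hu,
    ← show σ w = H2.adjointMap a b c d w from hσ w, H2.eval_kernel (hself _ hσ1) hu, hg, hh]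
  simp only [map_mul, map_add, conj_conj, H2.conj_ker]

/-- Lemma 2.3 (ii): for a linear fractional self-map `φ` and `w ∈ 𝔻` with
`conj a * w ≠ conj c`,
`(J W_{ξ_p,τ_p}) C_φ* C_φ K_w (z) = conj (ξ_p (conj z)) *
  ( -conj c * (g(w)/σ(w)) * K_{conj (φ 0)}(conj (τ_p (conj z)))
    + conj (h (1 / conj (σ w))) * g(w) * K_{conj (φ (σ w))}(conj (τ_p (conj z))) )`. -/
theorem stmt3 (p lam a b c d w : ℂ)
    (hp : ‖p‖ < 1) (hp0 : p ≠ 0) (hlam : ‖lam‖ = 1) (hlp : lam * p = conj p)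
    (φ : ℂ → ℂ) (hφ : ∀ z : ℂ, φ z = (a * z + b) / (c * z + d))
    (hdet : a * d - b * c ≠ 0)
    (hden : ∀ z : ℂ, ‖z‖ < 1 → c * z + d ≠ 0)
    (hself : ∀ z : ℂ, ‖z‖ < 1 → ‖φ z‖ < 1)
    (σ : ℂ → ℂ) (hσ : ∀ z : ℂ, σ z = (conj a * z - conj c) / (-(conj b) * z + conj d))
    (g : ℂ → ℂ) (hg : ∀ z : ℂ, g z = 1 / (-(conj b) * z + conj d))
    (h : ℂ → ℂ) (hh : ∀ z : ℂ, h z = c * z + d)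
    (hw : ‖w‖ < 1) (hwa : conj a * w ≠ conj c)
    (T : H2 →L[ℂ] H2) (hT : H2.IsCompOp φ T)
    (C : H2 → H2) (hC : H2.IsConjugation C) (hCJ : H2.IsJW p lam C) :
    ∀ z : ℂ, ‖z‖ < 1 →
      H2.eval (C ((ContinuousLinearMap.adjoint T) (T (H2.kernel w)))) z
        = conj (H2.xi p (conj z)) *
            (-(conj c) * (g w / σ w) *
                H2.ker (conj (φ 0)) (conj (H2.tau p lam (conj z)))
              + conj (h (1 / conj (σ w))) * g w *
                H2.ker (conj (φ (σ w))) (conj (H2.tau p lam (conj z)))) :=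
  stmt3_general p lam a b c d w hp hlam φ hφ hdet hden hself σ hσ g hg h hh hw hwa T hT C hCJ
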